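/- arXiv:2509.07454 — 2 statements merged into one kernel-verified Lean document; each statement's English description precedes it below -/
import Mathlib

section
/- Let B ∈ M_3(ℝ) be a cluster-cyclic exchange matrix. Then for any nonempty reduced sequence w, the set P^w = {(i,j) : i≠j and (ε_i^w b_{ij}^w > 0 or ε_j^w b_{ji}^w > 0)} has exactly four elements. -/
open Matrix

noncomputable section

abbrev Mat3 := Matrix (Fin 3) (Fin 3) ℝ

def pPart {n : ℕ} (A : Matrix (Fin n) (Fin n) ℝ) : Matrix (Fin n) (Fin n) ℝ :=
  Matrix.of fun i j => max (A i j) 0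

def Jmat {n : ℕ} (k : Fin n) : Matrix (Fin n) (Fin n) ℝ :=
  Matrix.diagonal fun i => if i = k then -1 else 1

/-- `A^{•k}`: keep only column `k`. -/
def colSel {n : ℕ} (k : Fin n) (A : Matrix (Fin n) (Fin n) ℝ) : Matrix (Fin n) (Fin n) ℝ :=
  Matrix.of fun i j => if j = k then A i j else 0

/-- `A^{k•}`: keep only row `k`. -/
def rowSel {n : ℕ} (k : Fin n) (A : Matrix (Fin n) (Fin n) ℝ) : Matrix (Fin n) (Fin n) ℝ :=
  Matrix.of fun i j => if i = k then A i j else 0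

/-- Matrix mutation in direction `k`. -/
def mutB {n : ℕ} (k : Fin n) (B : Matrix (Fin n) (Fin n) ℝ) : Matrix (Fin n) (Fin n) ℝ :=
  (Jmat k + colSel k (pPart (-B))) * B * (Jmat k + rowSel k (pPart B))

/-- One step of the simultaneous `(B, C, G)` recursion, mutating at direction `k`. -/
def CGstep {n : ℕ} (B0 : Matrix (Fin n) (Fin n) ℝ)
    (p : Matrix (Fin n) (Fin n) ℝ × Matrix (Fin n) (Fin n) ℝ × Matrix (Fin n) (Fin n) ℝ)
    (k : Fin n) :
    Matrix (Fin n) (Fin n) ℝ × Matrix (Fin n) (Fin n) ℝ × Matrix (Fin n) (Fin n) ℝ :=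
  (mutB k p.1,
   p.2.1 * Jmat k + p.2.1 * rowSel k (pPart p.1) + colSel k (pPart (-p.2.1)) * p.1,
   p.2.2 * Jmat k + p.2.2 * colSel k (pPart (-p.1)) - B0 * colSel k (pPart (-p.2.1)))

def CGmat {n : ℕ} (B : Matrix (Fin n) (Fin n) ℝ) (w : List (Fin n)) :
    Matrix (Fin n) (Fin n) ℝ × Matrix (Fin n) (Fin n) ℝ × Matrix (Fin n) (Fin n) ℝ :=
  w.foldl (CGstep B) (B, 1, 1)

/-- The exchange matrix `B^w`. -/
def Bmat {n : ℕ} (B : Matrix (Fin n) (Fin n) ℝ) (w : List (Fin n)) : Matrix (Fin n) (Fin n) ℝ :=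
  (CGmat B w).1

/-- The `C`-matrix `C^w`. -/
def Cmat {n : ℕ} (B : Matrix (Fin n) (Fin n) ℝ) (w : List (Fin n)) : Matrix (Fin n) (Fin n) ℝ :=
  (CGmat B w).2.1

/-- The `G`-matrix `G^w`. -/
def Gmat {n : ℕ} (B : Matrix (Fin n) (Fin n) ℝ) (w : List (Fin n)) : Matrix (Fin n) (Fin n) ℝ :=
  (CGmat B w).2.2

/-- A sequence is reduced if consecutive entries differ. -/
def ReducedSeq {n : ℕ} (w : List (Fin n)) : Prop := w.Chain' (· ≠ ·)

def SkewSymmetrizable {n : ℕ} (B : Matrix (Fin n) (Fin n) ℝ) : Prop :=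
  ∃ d : Fin n → ℝ, (∀ i, 0 < d i) ∧ (Matrix.diagonal d * B)ᵀ = -(Matrix.diagonal d * B)

def cyclicPattern : Mat3 := !![0,-1,1; 1,0,-1; -1,1,0]

/-- A rank-3 exchange matrix is cyclic if its sign pattern is `± cyclicPattern`. -/
def IsCyclic3 (B : Mat3) : Prop :=
  (∀ i j, Real.sign (B i j) = cyclicPattern i j) ∨
  (∀ i j, Real.sign (B i j) = - cyclicPattern i j)

/-- `B` is cluster-cyclic if every iterated mutation along a reduced sequence is cyclic. -/
def ClusterCyclic (B : Mat3) : Prop :=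
  ∀ w : List (Fin 3), ReducedSeq w → IsCyclic3 (Bmat B w)

/-- `ε` is a family of tropical signs for the (sign-coherent) `C`-pattern of `B`. -/
def IsTropSigns (B : Mat3) (ε : List (Fin 3) → Fin 3 → ℝ) : Prop :=
  ∀ w : List (Fin 3), ReducedSeq w → ∀ i : Fin 3,
    (ε w i = 1 ∨ ε w i = -1) ∧ ∀ j, 0 ≤ ε w i * Cmat B w j i

section Basic
variable {k : Fin 3} (A M : Mat3)

/-!
Along a reduced sequence every exchange matrix is cyclic, so a mutation at `k` only negates row
and column `k` and changes the remaining off-diagonal entry by the exchange relation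
`|b'ᵢⱼ| = |bᵢₖ| |bₖⱼ| - |bᵢⱼ|`. Mutating alternately at `p` and `q` therefore yields a positive
solution of a `2`-periodic recurrence whose coefficients multiply to `|b_pq b_qp|`; such a
solution exists only if `|b_pq b_qp| ≥ 4`.

With this bound one carries an invariant along `w = u t`: some `d ≠ t` has `ε_d b_dt > 0`,
`ε_t = -ε_d`, and column `t` of `C^w` is dominated by `|b_dt| / 2` times column `d`. After a
further mutation at `k ≠ t`, the vertex `y ≠ k` with `ε_k b_ky > 0` plays the role of `d`:
column `k` of `C` changes sign, column `y` gains `|b_ky|` times column `k`, which fixes its sign to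
`ε_k`, and `|b_yk b_ky| ≥ 4` restores the domination. So the tropical signs are never constant,
and for a cyclic matrix with non-constant signs exactly one edge, at the vertex of minority sign,
fails the condition defining `P^w`; the other two edges give the four ordered pairs.
-/

section Mutation

variable {n : ℕ}

lemma colSel_mul_apply (k : Fin n) (A M : Matrix (Fin n) (Fin n) ℝ) (i j : Fin n) :
    (colSel k A * M) i j = A i k * M k j := by
  simp [Matrix.mul_apply, colSel]

lemma mul_rowSel_apply (k : Fin n) (A M : Matrix (Fin n) (Fin n) ℝ) (i j : Fin n) :
    (M * rowSel k A) i j = M i k * A k j := by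
  simp [Matrix.mul_apply, rowSel]

lemma Jmat_mul_apply (k : Fin n) (M : Matrix (Fin n) (Fin n) ℝ) (i j : Fin n) :
    (Jmat k * M) i j = (if i = k then -1 else 1) * M i j := by
  simp [Jmat, Matrix.diagonal_mul]

lemma mul_Jmat_apply (k : Fin n) (M : Matrix (Fin n) (Fin n) ℝ) (i j : Fin n) :
    (M * Jmat k) i j = M i j * (if j = k then -1 else 1) := by
  simp [Jmat, Matrix.mul_diagonal]

lemma mutB_apply (k : Fin n) (A : Matrix (Fin n) (Fin n) ℝ) (i j : Fin n) :
    mutB k A i j =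
      ((if i = k then -1 else 1) * A i j + max (-A i k) 0 * A k j) * (if j = k then -1 else 1)
      + ((if i = k then -1 else 1) * A i k + max (-A i k) 0 * A k k) * max (A k j) 0 := by
  simp only [mutB, Matrix.add_mul, Matrix.mul_add, Matrix.add_apply, Jmat_mul_apply,
    mul_Jmat_apply, colSel_mul_apply, mul_rowSel_apply, pPart, Matrix.neg_apply, Matrix.of_apply]
  ring

variable {A : Matrix (Fin n) (Fin n) ℝ} {k : Fin n}

lemma mutB_apply_self_left (hkk : A k k = 0) {j : Fin n} (hjk : j ≠ k) :
    mutB k A k j = -A k j := by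
  simp [mutB_apply, hjk, hkk]

lemma mutB_apply_self_right (hkk : A k k = 0) {i : Fin n} (hik : i ≠ k) :
    mutB k A i k = -A i k := by
  simp [mutB_apply, hik, hkk]

lemma mutB_apply_of_ne (hkk : A k k = 0) {i j : Fin n} (hik : i ≠ k) (hjk : j ≠ k) :
    mutB k A i j = A i j + (max (-A i k) 0 * A k j + A i k * max (A k j) 0) := by
  simp only [mutB_apply, if_neg hik, if_neg hjk, hkk]
  ring

lemma abs_mutB_apply_of_eq_left (hkk : A k k = 0) {i j : Fin n} (hij : i ≠ j) (hik : i = k) :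
    |mutB k A i j| = |A i j| := by
  subst hik
  rw [mutB_apply_self_left hkk hij.symm, abs_neg]

lemma abs_mutB_apply_of_eq_right (hkk : A k k = 0) {i j : Fin n} (hij : i ≠ j) (hjk : j = k) :
    |mutB k A i j| = |A i j| := by
  subst hjk
  rw [mutB_apply_self_right hkk hij, abs_neg]

end Mutation

section Sequences

variable {n : ℕ} (B : Matrix (Fin n) (Fin n) ℝ)

lemma Cmat_nil : Cmat B [] = 1 := rfl

lemma CGmat_append_singleton (w : List (Fin n)) (k : Fin n) :
    CGmat B (w ++ [k]) = CGstep B (CGmat B w) k := by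
  simp [CGmat, List.foldl_append]

lemma Bmat_append_singleton (w : List (Fin n)) (k : Fin n) :
    Bmat B (w ++ [k]) = mutB k (Bmat B w) := by
  simp [Bmat, CGmat_append_singleton, CGstep]

lemma Cmat_append_singleton_apply (w : List (Fin n)) (k i j : Fin n) :
    Cmat B (w ++ [k]) i j = Cmat B w i j * (if j = k then -1 else 1)
      + (Cmat B w i k * max (Bmat B w k j) 0 + max (-Cmat B w i k) 0 * Bmat B w k j) := by
  simp only [Cmat, Bmat, CGmat_append_singleton, CGstep, Matrix.add_apply, mul_Jmat_apply,
    mul_rowSel_apply, colSel_mul_apply, pPart, Matrix.neg_apply, Matrix.of_apply]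
  ring

lemma Cmat_append_singleton_apply_self {w : List (Fin n)} {k : Fin n}
    (hkk : Bmat B w k k = 0) (i : Fin n) : Cmat B (w ++ [k]) i k = -Cmat B w i k := by
  simp [Cmat_append_singleton_apply, hkk]

lemma reducedSeq_append_singleton_iff {w : List (Fin n)} {k : Fin n} :
    ReducedSeq (w ++ [k]) ↔ ReducedSeq w ∧ ∀ a ∈ w.getLast?, a ≠ k := by
  show List.IsChain _ _ ↔ List.IsChain _ _ ∧ _
  simp [List.isChain_append]

end Sequences

section Signs

lemma Real.mul_pos_of_sign_mul_sign_eq_one {x y : ℝ} (h : Real.sign x * Real.sign y = 1) :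
    0 < x * y := by
  have hx : x ≠ 0 := by rintro rfl; simp at h
  have hy : y ≠ 0 := by rintro rfl; simp at h
  have hpos := mul_pos (Real.sign_mul_pos_of_ne_zero x hx) (Real.sign_mul_pos_of_ne_zero y hy)
  have hxy : Real.sign x * x * (Real.sign y * y) = x * y := by linear_combination (x * y) * h
  rwa [hxy] at hpos

lemma Real.mul_neg_of_sign_mul_sign_eq_neg_one {x y : ℝ}
    (h : Real.sign x * Real.sign y = -1) : x * y < 0 := by
  have hx : x ≠ 0 := by rintro rfl; simp at h
  have hy : y ≠ 0 := by rintro rfl; simp at h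
  have hpos := mul_pos (Real.sign_mul_pos_of_ne_zero x hx) (Real.sign_mul_pos_of_ne_zero y hy)
  have hxy : Real.sign x * x * (Real.sign y * y) = -(x * y) := by linear_combination (x * y) * h
  rw [hxy] at hpos
  linarith

lemma mul_pos_of_mul_pos_of_mul_pos {a b c : ℝ} (hab : 0 < a * b) (hbc : 0 < b * c) :
    0 < a * c :=
  pos_of_mul_pos_left (by nlinarith [mul_pos hab hbc]) (mul_self_nonneg b)

lemma mul_neg_of_mul_pos_of_mul_neg {a b c : ℝ} (hab : 0 < a * b) (hbc : b * c < 0) :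
    a * c < 0 :=
  neg_of_mul_neg_left (by nlinarith [mul_neg_of_pos_of_neg hab hbc]) (mul_self_nonneg b)

lemma mul_pos_of_mul_neg_of_mul_neg {a b c : ℝ} (hab : a * b < 0) (hbc : b * c < 0) :
    0 < a * c :=
  pos_of_mul_pos_left (by nlinarith [mul_pos_of_neg_of_neg hab hbc]) (mul_self_nonneg b)

end Signs

section Cyclic

lemma Fin3.exists_third {p q : Fin 3} (hpq : p ≠ q) : ∃ r, r ≠ p ∧ r ≠ q := by
  revert p q; decide

lemma Fin3.eq_or_eq_or_eq {a b c : Fin 3} (hab : a ≠ b) (hbc : b ≠ c) (hac : a ≠ c) (j : Fin 3) :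
    j = a ∨ j = b ∨ j = c := by
  revert a b c j; decide

lemma Fin3.exists_two_ne (k : Fin 3) : ∃ p q, p ≠ k ∧ q ≠ k ∧ p ≠ q := by
  revert k; decide

lemma cyclicPattern_self (i : Fin 3) : cyclicPattern i i = 0 := by
  fin_cases i <;> simp [cyclicPattern]

lemma cyclicPattern_mul_swap {i j : Fin 3} (hij : i ≠ j) :
    cyclicPattern i j * cyclicPattern j i = -1 := by
  fin_cases i <;> fin_cases j <;> simp_all [cyclicPattern]

lemma cyclicPattern_mul_cyclicPattern {i j k : Fin 3} (hij : i ≠ j) (hjk : j ≠ k) (hik : i ≠ k) :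
    cyclicPattern i j * cyclicPattern j k = 1 := by
  fin_cases i <;> fin_cases j <;> fin_cases k <;> simp_all [cyclicPattern]

lemma cyclicPattern_mul_cyclicPattern_row {i j k : Fin 3} (hij : i ≠ j) (hjk : j ≠ k)
    (hik : i ≠ k) : cyclicPattern i j * cyclicPattern i k = -1 := by
  fin_cases i <;> fin_cases j <;> fin_cases k <;> simp_all [cyclicPattern]

namespace IsCyclic3

variable {A : Mat3} (hA : IsCyclic3 A)
include hA

lemma exists_sign : ∃ s : ℝ, s * s = 1 ∧ ∀ i j, Real.sign (A i j) = s * cyclicPattern i j := by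
  rcases hA with h | h
  · exact ⟨1, by norm_num, fun i j => by rw [h, one_mul]⟩
  · exact ⟨-1, by norm_num, fun i j => by rw [h, neg_one_mul]⟩

lemma sign_mul_sign {i j k l : Fin 3} : Real.sign (A i j) * Real.sign (A k l) =
    cyclicPattern i j * cyclicPattern k l := by
  obtain ⟨s, hs, hsign⟩ := hA.exists_sign
  rw [hsign, hsign]
  linear_combination (cyclicPattern i j * cyclicPattern k l) * hs

lemma apply_self (i : Fin 3) : A i i = 0 := by
  obtain ⟨s, -, hsign⟩ := hA.exists_sign
  rw [← Real.sign_eq_zero_iff, hsign, cyclicPattern_self, mul_zero]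

lemma mul_apply_swap_neg {i j : Fin 3} (hij : i ≠ j) : A i j * A j i < 0 :=
  Real.mul_neg_of_sign_mul_sign_eq_neg_one (by rw [hA.sign_mul_sign, cyclicPattern_mul_swap hij])

lemma apply_ne_zero {i j : Fin 3} (hij : i ≠ j) : A i j ≠ 0 := by
  intro h
  simpa [h] using hA.mul_apply_swap_neg hij

lemma mul_apply_apply_pos {i j k : Fin 3} (hij : i ≠ j) (hjk : j ≠ k) (hik : i ≠ k) :
    0 < A i j * A j k :=
  Real.mul_pos_of_sign_mul_sign_eq_one
    (by rw [hA.sign_mul_sign, cyclicPattern_mul_cyclicPattern hij hjk hik])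

lemma apply_mul_apply_neg {i j k : Fin 3} (hij : i ≠ j) (hjk : j ≠ k) (hik : i ≠ k) :
    A i j * A i k < 0 :=
  Real.mul_neg_of_sign_mul_sign_eq_neg_one
    (by rw [hA.sign_mul_sign, cyclicPattern_mul_cyclicPattern_row hij hjk hik])

lemma exists_mul_apply_neg_pos {s : ℝ} (hs : s ≠ 0) (k : Fin 3) :
    ∃ y z, y ≠ k ∧ z ≠ k ∧ y ≠ z ∧ s * A k y < 0 ∧ 0 < s * A k z := by
  obtain ⟨p, q, hpk, hqk, hpq⟩ := Fin3.exists_two_ne k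
  have hneg : s * A k p * (s * A k q) < 0 := by
    have := hA.apply_mul_apply_neg hpk.symm hpq hqk.symm
    nlinarith [mul_self_pos.2 hs]
  rcases mul_neg_iff.1 hneg with ⟨hp, hq⟩ | ⟨hp, hq⟩
  · exact ⟨q, p, hqk, hpk, hpq.symm, hq, hp⟩
  · exact ⟨p, q, hpk, hqk, hpq, hp, hq⟩

end IsCyclic3

end Cyclic

section ExchangeRelation

lemma max_neg_mul_add_mul_max {a b : ℝ} (hab : 0 ≤ a * b) :
    max (-a) 0 * b + a * max b 0 = |a| * b := by
  rcases le_total 0 a with ha | ha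
  · rcases eq_or_lt_of_le ha with rfl | ha
    · simp
    · have hb : 0 ≤ b := nonneg_of_mul_nonneg_right (by linarith) ha
      simp [ha.le, hb, abs_of_nonneg]
  · rcases eq_or_lt_of_le ha with rfl | ha
    · simp
    · have hb : b ≤ 0 := by nlinarith
      simp [ha.le, hb, abs_of_nonpos]

lemma abs_add_of_mul_neg_of_mul_pos {x y : ℝ} (hxy : x * y < 0) (h : 0 < (x + y) * y) :
    |x + y| = |y| - |x| := by
  rcases lt_or_gt_of_ne (show y ≠ 0 by rintro rfl; simp at h) with hy | hy
  · have hx : 0 < x := by nlinarith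
    rw [abs_of_neg (by nlinarith), abs_of_neg hy, abs_of_pos hx]
    ring
  · have hx : x < 0 := by nlinarith
    rw [abs_of_pos (by nlinarith), abs_of_pos hy, abs_of_neg hx]
    ring

/-- The two correction terms of the mutation combine to `|a_ik| a_kj`, whose sign is opposite to
that of `a_ij` but, by cyclicity of the mutated matrix, equal to that of the new entry. -/
lemma IsCyclic3.abs_mutB_apply {A : Mat3} {i j k : Fin 3} (hA : IsCyclic3 A)
    (hA' : IsCyclic3 (mutB k A)) (hij : i ≠ j) (hik : i ≠ k) (hjk : j ≠ k) :
    |mutB k A i j| = |A i k| * |A k j| - |A i j| := by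
  have hform : mutB k A i j = A i j + |A i k| * A k j := by
    rw [mutB_apply_of_ne (hA.apply_self k) hik hjk,
      max_neg_mul_add_mul_max (hA.mul_apply_apply_pos hik hjk.symm hij).le]
  have hjk_kj : 0 < -A j k * A k j := by nlinarith [hA.mul_apply_swap_neg hjk]
  have hold : A i j * A k j < 0 :=
    mul_neg_of_mul_pos_of_mul_neg (hA.mul_apply_apply_pos hij hjk hik) (hA.mul_apply_swap_neg hjk)
  have hnew : 0 < mutB k A i j * A k j := by
    refine mul_pos_of_mul_pos_of_mul_pos ?_ hjk_kj
    rw [← mutB_apply_self_right (hA.apply_self k) hjk]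
    exact hA'.mul_apply_apply_pos hij hjk hik
  have hik_pos : 0 < |A i k| := abs_pos.2 (hA.apply_ne_zero hik)
  rw [hform, abs_add_of_mul_neg_of_mul_pos, abs_mul, abs_abs]
  · nlinarith
  · rw [← hform]; nlinarith

end ExchangeRelation

section Recurrence

lemma exists_neg_of_le_sub {f : ℕ → ℝ} {δ : ℝ} (hδ : 0 < δ) (h : ∀ n, f (n + 1) ≤ f n - δ) :
    ∃ n, f n < 0 := by
  have hle : ∀ n : ℕ, f n ≤ f 0 - n * δ := by
    intro n
    induction n with
    | zero => simp
    | succ n ih => push_cast; linarith [h n]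
  obtain ⟨n, hn⟩ := exists_nat_gt (f 0 / δ)
  refine ⟨n, (hle n).trans_lt ?_⟩
  rw [div_lt_iff₀ hδ] at hn
  linarith

/-- The differences `v (n + 1) - v n` drop by `(2 - g) v (n + 1)` at each step, so they become
negative, and from then on `v` decreases by a fixed amount per step. -/
lemma not_forall_pos_of_recurrence {g : ℝ} (hg : g < 2) {v : ℕ → ℝ}
    (hrec : ∀ n, v (n + 2) = g * v (n + 1) - v n) : ¬∀ n, 0 < v n := by
  intro hv
  set d : ℕ → ℝ := fun n => v (n + 1) - v n with hd_def
  have hd : ∀ n, d (n + 1) = d n - (2 - g) * v (n + 1) := fun n => by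
    simp only [hd_def, hrec]; ring
  have hanti : Antitone d :=
    antitone_nat_of_succ_le fun n => by rw [hd]; nlinarith [hv (n + 1)]
  by_cases hneg : ∃ N, d N < 0
  · obtain ⟨N, hN⟩ := hneg
    obtain ⟨n, hn⟩ := exists_neg_of_le_sub (f := fun n => v (N + n)) (neg_pos.2 hN) fun n => by
      have := hanti (Nat.le_add_right N n)
      simp only [hd_def, ← add_assoc] at this ⊢
      linarith
    exact (hv _).not_gt hn
  · simp only [not_exists, not_lt] at hneg
    have hmono : Monotone v := monotone_nat_of_le_succ fun n => by linarith [hneg n]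
    obtain ⟨n, hn⟩ := exists_neg_of_le_sub (f := d) (δ := (2 - g) * v 0)
      (mul_pos (by linarith) (hv 0)) fun n => by rw [hd]; nlinarith [hmono (Nat.zero_le (n + 1))]
    exact (hneg n).not_gt hn

/-- Rescaling by `√(γ (n + 1))` reduces a `2`-periodic recurrence to a constant one. -/
lemma not_forall_pos_of_periodic_recurrence {γ : ℕ → ℝ} (hγ : ∀ n, 0 < γ n)
    (hper : ∀ n, γ (n + 2) = γ n) (h4 : γ 0 * γ 1 < 4) {u : ℕ → ℝ}
    (hrec : ∀ n, u (n + 2) = γ n * u (n + 1) - u n) : ¬∀ n, 0 < u n := by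
  intro hu
  set g := √(γ 0 * γ 1)
  have hprod : ∀ n, √(γ n) * √(γ (n + 1)) = g := by
    intro n
    rw [← Real.sqrt_mul (hγ n).le]
    induction n with
    | zero => rfl
    | succ n ih => rw [hper, mul_comm, ih]
  have hg : g < 2 := (Real.sqrt_lt' two_pos).2 (by linarith)
  refine not_forall_pos_of_recurrence hg (v := fun n => u n * √(γ (n + 1))) (fun n => ?_)
    fun n => mul_pos (hu n) (Real.sqrt_pos.2 (hγ _))
  simp only [hper, hrec, ← hprod n]
  linear_combination (-u (n + 1) * √(γ (n + 1))) * Real.mul_self_sqrt (hγ n).le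

end Recurrence

section RankTwo

/-- Along `p, q, p, q, …` the entries between `p` and `q` keep their absolute values, while for
the third vertex `r` the entries `u n = |a_{r, ℓ (n + 1)}|` obey `u (n + 2) = γ n u (n + 1) - u n`
with `γ` alternating between `|a_pq|` and `|a_qp|`. -/
lemma four_le_abs_mul_abs_of_alternating {A : ℕ → Mat3} {ℓ : ℕ → Fin 3}
    (hcyc : ∀ n, IsCyclic3 (A n)) (hℓ : ∀ n, ℓ (n + 1) ≠ ℓ n) (hper : ∀ n, ℓ (n + 2) = ℓ n)
    (hA : ∀ n, A (n + 1) = mutB (ℓ n) (A n)) :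
    4 ≤ |A 0 (ℓ 0) (ℓ 1)| * |A 0 (ℓ 1) (ℓ 0)| := by
  obtain ⟨r, hr0, hr1⟩ := Fin3.exists_third (hℓ 0).symm
  have hr : ∀ n, r ≠ ℓ n := by
    have : ∀ n, (ℓ n = ℓ 0 ∧ ℓ (n + 1) = ℓ 1) ∨ (ℓ n = ℓ 1 ∧ ℓ (n + 1) = ℓ 0) := by
      intro n
      induction n with
      | zero => exact Or.inl ⟨rfl, rfl⟩
      | succ n ih => rw [hper]; tauto
    intro n
    rcases this n with ⟨h, -⟩ | ⟨h, -⟩ <;> rw [h] <;> assumption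
  have hkeep : ∀ n i j, i ≠ j → (i = ℓ n ∨ j = ℓ n) → |A (n + 1) i j| = |A n i j| := by
    rintro n i j hij (h | h) <;> rw [hA]
    · exact abs_mutB_apply_of_eq_left ((hcyc n).apply_self _) hij h
    · exact abs_mutB_apply_of_eq_right ((hcyc n).apply_self _) hij h
  set γ : ℕ → ℝ := fun n => |A n (ℓ n) (ℓ (n + 1))|
  set u : ℕ → ℝ := fun n => |A n r (ℓ (n + 1))|
  have hγ1 : γ 1 = |A 0 (ℓ 1) (ℓ 0)| := by
    simp only [γ, hper]
    exact hkeep 0 _ _ (hℓ 0) (Or.inr rfl)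
  have hγper : ∀ n, γ (n + 2) = γ n := by
    intro n
    simp only [γ, hper, show n + 2 + 1 = n + 1 + 2 by ring]
    rw [hkeep _ _ _ (hℓ n).symm (Or.inr rfl), hkeep _ _ _ (hℓ n).symm (Or.inl rfl)]
  have hrec : ∀ n, u (n + 2) = γ n * u (n + 1) - u n := by
    intro n
    simp only [u, γ, hper, show n + 2 + 1 = n + 1 + 2 by ring]
    rw [hkeep _ _ _ (hr n) (Or.inr rfl), hkeep _ _ _ (hr (n + 1)) (Or.inr rfl), hA n,
      (hcyc n).abs_mutB_apply (hA n ▸ hcyc (n + 1)) (hr (n + 1)) (hr n) (hℓ n)]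
    ring
  by_contra h4
  refine not_forall_pos_of_periodic_recurrence (γ := γ) (fun n => ?_) hγper
    (by rw [hγ1]; exact lt_of_not_ge h4) hrec fun n => ?_
  · exact abs_pos.2 ((hcyc n).apply_ne_zero (hℓ n).symm)
  · exact abs_pos.2 ((hcyc n).apply_ne_zero (hr (n + 1)))

lemma ClusterCyclic.four_le_abs_mul_abs {B : Mat3} (hB : ClusterCyclic B) {w : List (Fin 3)}
    (hw : ReducedSeq w) {x y : Fin 3} (hxy : x ≠ y) :
    4 ≤ |Bmat B w x y| * |Bmat B w y x| := by
  suffices key : ∀ p q, p ≠ q → (∀ a ∈ w.getLast?, a ≠ p) →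
      4 ≤ |Bmat B w p q| * |Bmat B w q p| by
    by_cases hx : ∀ a ∈ w.getLast?, a ≠ x
    · exact key x y hxy hx
    · simp only [not_forall, not_not] at hx
      obtain ⟨x, hx, rfl⟩ := hx
      rw [mul_comm]
      exact key y x hxy.symm fun a ha hay => hxy (Option.mem_unique hx (hay ▸ ha))
  intro p q hpq hlast
  set ℓ : ℕ → Fin 3 := fun n => if Even n then p else q
  set W : ℕ → List (Fin 3) := fun n => w ++ (List.range n).map ℓ
  have hW : ∀ n, W (n + 1) = W n ++ [ℓ n] := by simp [W, List.range_succ]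
  have hℓ : ∀ n, ℓ (n + 1) ≠ ℓ n := fun n => by
    by_cases h : Even n <;> simp [ℓ, h, Nat.even_add_one, hpq, hpq.symm]
  have hred : ∀ n, ReducedSeq (W n) := by
    intro n
    induction n with
    | zero => simpa [W] using hw
    | succ n ih =>
      rw [hW, reducedSeq_append_singleton_iff]
      refine ⟨ih, ?_⟩
      cases n with
      | zero => simpa [W, ℓ] using hlast
      | succ n => simpa [hW] using (hℓ n).symm
  have := four_le_abs_mul_abs_of_alternating (A := fun n => Bmat B (W n)) (ℓ := ℓ)
    (fun n => hB _ (hred n)) hℓ (fun n => by simp [ℓ, Nat.even_add])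
    (fun n => by simp only [hW, Bmat_append_singleton])
  simpa [W, ℓ] using this

end RankTwo

section TropicalSigns

variable {B : Mat3} {ε : List (Fin 3) → Fin 3 → ℝ} {w : List (Fin 3)}

namespace IsTropSigns

variable (hε : IsTropSigns B ε) (hw : ReducedSeq w)
include hε hw

lemma eq_of_pos {s : ℝ} (hs : s = 1 ∨ s = -1) {i j : Fin 3} (h : 0 < s * Cmat B w i j) :
    ε w j = s := by
  have hc := (hε w hw j).2 i
  rcases (hε w hw j).1 with h1 | h1 <;> rcases hs with rfl | rfl <;> rw [h1] at hc ⊢ <;>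
    first | rfl | linarith

lemma abs_Cmat_apply (i j : Fin 3) : |Cmat B w i j| = ε w j * Cmat B w i j := by
  have hc := (hε w hw j).2 i
  rcases (hε w hw j).1 with h | h <;> rw [h] at hc ⊢
  · rw [one_mul] at hc ⊢; exact abs_of_nonneg hc
  · rw [neg_one_mul] at hc ⊢; exact abs_of_nonpos (by linarith)

lemma Cmat_append_singleton_apply_of_ne {j k : Fin 3} (hjk : j ≠ k) (i : Fin 3) :
    Cmat B (w ++ [k]) i j = Cmat B w i j + Cmat B w i k * max (ε w k * Bmat B w k j) 0 := by
  rw [Cmat_append_singleton_apply, if_neg hjk, mul_one]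
  have hc := (hε w hw k).2 i
  rcases (hε w hw k).1 with h | h <;> rw [h] at hc ⊢
  · rw [one_mul] at hc ⊢
    rw [max_eq_right (by linarith : -Cmat B w i k ≤ 0), zero_mul, add_zero]
  · rw [neg_one_mul] at hc ⊢
    rw [max_eq_left (by linarith : 0 ≤ -Cmat B w i k)]
    linear_combination Cmat B w i k * max_zero_sub_max_neg_zero_eq_self (Bmat B w k j)

lemma Cmat_append_singleton_apply_of_nonpos {j k : Fin 3} (hjk : j ≠ k)
    (hkj : ε w k * Bmat B w k j ≤ 0) (i : Fin 3) : Cmat B (w ++ [k]) i j = Cmat B w i j := by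
  rw [hε.Cmat_append_singleton_apply_of_ne hw hjk, max_eq_right hkj, mul_zero, add_zero]

lemma le_Cmat_append_singleton_apply {k y : Fin 3} (hyk : y ≠ k)
    (hpos : 0 < ε w k * Bmat B w k y) {i : Fin 3}
    (hpush : 0 ≤ 2 * ε w k * Cmat B w i y + |Bmat B w k y| * |Cmat B w i k|) :
    |Bmat B w k y| * |Cmat B w i k| ≤ 2 * (ε w k * Cmat B (w ++ [k]) i y) := by
  have hs : |ε w k| = 1 := by rcases (hε w hw k).1 with h | h <;> simp [h]
  have habs : |Bmat B w k y| = ε w k * Bmat B w k y := by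
    rw [← one_mul |Bmat B w k y|, ← hs, ← abs_mul, abs_of_pos hpos]
  rw [hε.Cmat_append_singleton_apply_of_ne hw hyk, max_eq_left hpos.le, ← habs]
  rw [hε.abs_Cmat_apply hw] at hpush ⊢
  nlinarith [mul_nonneg (abs_nonneg (Bmat B w k y)) ((hε w hw k).2 i)]

lemma push_of_eq {k y : Fin 3} (h : ε w y = ε w k) (b : ℝ) (i : Fin 3) :
    0 ≤ 2 * ε w k * Cmat B w i y + |b| * |Cmat B w i k| := by
  have := (hε w hw y).2 i
  rw [h] at this
  nlinarith [mul_nonneg (abs_nonneg b) (abs_nonneg (Cmat B w i k))]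

end IsTropSigns

/-- Every column of `C^w` is nonzero; only then does sign-coherence pin down `ε w`. -/
def HasSignWitnesses (B : Mat3) (ε : List (Fin 3) → Fin 3 → ℝ) (w : List (Fin 3)) : Prop :=
  ∀ j, ∃ i, 0 < ε w j * Cmat B w i j

/-- The invariant carried along a reduced sequence `w` whose last letter is `t`. -/
structure Dominates (B : Mat3) (ε : List (Fin 3) → Fin 3 → ℝ) (w : List (Fin 3))
    (d t : Fin 3) : Prop where
  eps_eq_neg : ε w t = -ε w d
  mul_pos : 0 < ε w d * Bmat B w d t
  abs_le : ∀ i, 2 * |Cmat B w i t| ≤ |Bmat B w d t| * |Cmat B w i d|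

lemma dominates_append_singleton (hB : ClusterCyclic B) (hε : IsTropSigns B ε) {k y : Fin 3}
    (hw' : ReducedSeq (w ++ [k])) (hwit : HasSignWitnesses B ε w) (hyk : y ≠ k)
    (hpos : 0 < ε w k * Bmat B w k y)
    (hpush : ∀ i, 0 ≤ 2 * ε w k * Cmat B w i y + |Bmat B w k y| * |Cmat B w i k|) :
    HasSignWitnesses B ε (w ++ [k]) ∧ Dominates B ε (w ++ [k]) y k := by
  obtain ⟨hw, -⟩ := reducedSeq_append_singleton_iff.1 hw'
  have hA := hB w hw
  set s := ε w k
  have hs : s = 1 ∨ s = -1 := (hε w hw k).1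
  have hs_abs : |s| = 1 := by rcases hs with h | h <;> simp [h]
  obtain ⟨z, hzk, hzy⟩ := Fin3.exists_third hyk.symm
  have hCk : ∀ i, Cmat B (w ++ [k]) i k = -Cmat B w i k :=
    Cmat_append_singleton_apply_self B (hA.apply_self k)
  have hCz : ∀ i, Cmat B (w ++ [k]) i z = Cmat B w i z :=
    hε.Cmat_append_singleton_apply_of_nonpos hw hzk (mul_neg_of_mul_pos_of_mul_neg hpos
      (hA.apply_mul_apply_neg hyk.symm hzy.symm hzk.symm)).le
  have hCy (i : Fin 3) := hε.le_Cmat_append_singleton_apply hw hyk hpos (hpush i)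
  have hwy : ∀ i, 0 < s * Cmat B w i k → 0 < s * Cmat B (w ++ [k]) i y := by
    intro i hi
    have := hCy i
    rw [hε.abs_Cmat_apply hw] at this
    nlinarith [abs_pos.2 (hA.apply_ne_zero hyk.symm)]
  obtain ⟨ik, hik⟩ := hwit k
  have hek : ε (w ++ [k]) k = -s :=
    hε.eq_of_pos hw' (by rcases hs with h | h <;> simp [h]) (i := ik) (by rw [hCk]; linarith)
  have hey : ε (w ++ [k]) y = s := hε.eq_of_pos hw' hs (hwy ik hik)
  have hBy : Bmat B (w ++ [k]) y k = -Bmat B w y k := by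
    rw [Bmat_append_singleton, mutB_apply_self_right (hA.apply_self k) hyk]
  refine ⟨fun j => ?_, ⟨by rw [hek, hey], ?_, fun i => ?_⟩⟩
  · rcases Fin3.eq_or_eq_or_eq hyk.symm hzy.symm hzk.symm j with rfl | rfl | rfl
    · exact ⟨ik, by rw [hek, hCk]; linarith⟩
    · exact ⟨ik, by rw [hey]; exact hwy ik hik⟩
    · obtain ⟨iz, hiz⟩ := hwit j
      exact ⟨iz, by rw [hε.eq_of_pos hw' (hε w hw j).1 (i := iz) (by rwa [hCz]), hCz]; exact hiz⟩
  · rw [hey, hBy, mul_neg, neg_pos]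
    exact mul_neg_of_mul_pos_of_mul_neg hpos (hA.mul_apply_swap_neg hyk.symm)
  · rw [hCk, abs_neg, hBy, abs_neg]
    have hle : s * Cmat B (w ++ [k]) i y ≤ |Cmat B (w ++ [k]) i y| := by
      simpa [abs_mul, hs_abs] using le_abs_self (s * Cmat B (w ++ [k]) i y)
    nlinarith [mul_le_mul_of_nonneg_left hle (abs_nonneg (Bmat B w y k)),
      mul_le_mul_of_nonneg_left (hCy i) (abs_nonneg (Bmat B w y k)),
      mul_le_mul_of_nonneg_right (hB.four_le_abs_mul_abs hw hyk) (abs_nonneg (Cmat B w i k))]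

end TropicalSigns

section Invariant

variable {B : Mat3} {ε : List (Fin 3) → Fin 3 → ℝ} {w : List (Fin 3)}

lemma Dominates.exists_partner (hB : ClusterCyclic B) (hε : IsTropSigns B ε)
    (hw : ReducedSeq w) {d t k : Fin 3} (hdom : Dominates B ε w d t) (hkt : k ≠ t) :
    ∃ y, y ≠ k ∧ 0 < ε w k * Bmat B w k y ∧
      ∀ i, 0 ≤ 2 * ε w k * Cmat B w i y + |Bmat B w k y| * |Cmat B w i k| := by
  have hA := hB w hw
  have hd := (hε w hw d).1
  by_cases hkd : k = d
  · subst hkd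
    refine ⟨t, hkt.symm, hdom.mul_pos, fun i => ?_⟩
    have hle : -|Cmat B w i t| ≤ ε w k * Cmat B w i t := by
      have := neg_abs_le (ε w k * Cmat B w i t)
      rcases hd with h | h <;> simp_all
    linarith [hdom.abs_le i]
  have hdt : d ≠ t := by
    rintro rfl
    have := hdom.eps_eq_neg
    rcases hd with h | h <;> rw [h] at this <;> norm_num at this
  have htk : 0 < ε w d * Bmat B w t k :=
    mul_pos_of_mul_pos_of_mul_pos hdom.mul_pos (hA.mul_apply_apply_pos hdt hkt.symm (Ne.symm hkd))
  have hk : ε w k = ε w d ∨ ε w k = ε w t := by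
    rw [hdom.eps_eq_neg]
    rcases (hε w hw k).1 with h | h <;> rcases hd with h' | h' <;> simp [h, h']
  rcases hk with hk | hk
  · refine ⟨d, Ne.symm hkd, ?_, hε.push_of_eq hw hk.symm _⟩
    rw [hk]
    exact mul_pos_of_mul_pos_of_mul_pos htk (hA.mul_apply_apply_pos hkt.symm hkd hdt.symm)
  · refine ⟨t, hkt.symm, ?_, hε.push_of_eq hw hk.symm _⟩
    rw [hk, hdom.eps_eq_neg, neg_mul, neg_pos]
    exact mul_neg_of_mul_pos_of_mul_neg htk (hA.mul_apply_swap_neg hkt.symm)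

lemma exists_dominates (hB : ClusterCyclic B) (hε : IsTropSigns B ε) :
    ∀ (w : List (Fin 3)) (t : Fin 3), ReducedSeq (w ++ [t]) →
      HasSignWitnesses B ε (w ++ [t]) ∧ ∃ d, Dominates B ε (w ++ [t]) d t := by
  intro w
  induction w using List.reverseRecOn with
  | nil =>
    intro t ht
    have hnil : ReducedSeq ([] : List (Fin 3)) := List.isChain_nil
    have heps : ∀ j, ε [] j = 1 := fun j =>
      hε.eq_of_pos hnil (Or.inl rfl) (i := j) (by simp [Cmat_nil])
    obtain ⟨-, y, -, hyt, -, -, hy⟩ := (hB [] hnil).exists_mul_apply_neg_pos one_ne_zero t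
    obtain ⟨hwit, hdom⟩ := dominates_append_singleton hB hε ht
      (fun j => ⟨j, by simp [heps, Cmat_nil]⟩) hyt (by rwa [heps])
      (hε.push_of_eq hnil (by rw [heps, heps]) _)
    exact ⟨hwit, y, hdom⟩
  | append_singleton u s ih =>
    intro t ht
    obtain ⟨hus, hst⟩ := reducedSeq_append_singleton_iff.1 ht
    obtain ⟨hwit, d, hdom⟩ := ih s hus
    obtain ⟨y, hyt, hpos, hpush⟩ :=
      hdom.exists_partner hB hε hus (k := t) (Ne.symm (by simpa using hst))
    obtain ⟨hwit', hdom'⟩ := dominates_append_singleton hB hε ht hwit hyt hpos hpush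
    exact ⟨hwit', y, hdom'⟩

end Invariant

section Count

lemma exists_forall_ne_eq_neg {e : Fin 3 → ℝ} (he : ∀ i, e i = 1 ∨ e i = -1) {t d : Fin 3}
    (htd : e t = -e d) : ∃ m, ∀ j, j ≠ m → e j = -e m := by
  have hdt : d ≠ t := by
    rintro rfl
    rcases he d with h | h <;> rw [h] at htd <;> norm_num at htd
  obtain ⟨x, hxd, hxt⟩ := Fin3.exists_third hdt
  have hx : e x = e t ∨ e x = e d := by
    rcases he x with h | h <;> rcases he t with h' | h' <;> [left; right; right; left] <;> linarith
  rcases hx with hx | hx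
  · refine ⟨d, fun j hj => ?_⟩
    rcases Fin3.eq_or_eq_or_eq hdt hxt.symm hxd.symm j with rfl | rfl | rfl
    · exact absurd rfl hj
    · exact htd
    · rw [hx, htd]
  · refine ⟨t, fun j hj => ?_⟩
    rcases Fin3.eq_or_eq_or_eq hdt hxt.symm hxd.symm j with rfl | rfl | rfl
    · linarith
    · exact absurd rfl hj
    · rw [hx]; linarith

lemma Fin3.ncard_offDiag_diff {m y : Fin 3} (hmy : m ≠ y) :
    {p : Fin 3 × Fin 3 | p.1 ≠ p.2 ∧ p ≠ (m, y) ∧ p ≠ (y, m)}.ncard = 4 := by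
  rw [Set.ncard_eq_toFinset_card']
  revert m y
  decide

/-- Only pairs meeting the minority vertex `m` can fail, and they fail exactly along the one
edge `{m, y}` where `e m * A m y < 0`. -/
lemma IsCyclic3.ncard_eq_four {A : Mat3} (hA : IsCyclic3 A) {e : Fin 3 → ℝ}
    (he : ∀ i, e i = 1 ∨ e i = -1) {m : Fin 3} (hm : ∀ j, j ≠ m → e j = -e m) :
    {p : Fin 3 × Fin 3 | p.1 ≠ p.2 ∧
      (0 < e p.1 * A p.1 p.2 ∨ 0 < e p.2 * A p.2 p.1)}.ncard = 4 := by
  have hem : e m ≠ 0 := by rcases he m with h | h <;> rw [h] <;> norm_num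
  obtain ⟨y, z, hym, hzm, hyz, hy, hz⟩ := hA.exists_mul_apply_neg_pos hem m
  have hym' : e y * A y m ≤ 0 := by
    have := mul_pos_of_mul_neg_of_mul_neg hy (hA.mul_apply_swap_neg hym.symm)
    rw [hm y hym]
    linarith
  have hyz' : 0 < e y * A y z ∨ 0 < e z * A z y := by
    have hprod : e y * A y z * (e z * A z y) < 0 := by
      rw [hm y hym, hm z hzm]
      nlinarith [hA.mul_apply_swap_neg hyz, mul_self_pos.2 hem]
    rcases mul_neg_iff.1 hprod with ⟨h, -⟩ | ⟨-, h⟩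
    · exact Or.inl h
    · exact Or.inr h
  rw [← Fin3.ncard_offDiag_diff hym.symm]
  congr 1
  ext ⟨i, j⟩
  rcases Fin3.eq_or_eq_or_eq hym.symm hyz hzm.symm i with rfl | rfl | rfl <;>
  rcases Fin3.eq_or_eq_or_eq hym.symm hyz hzm.symm j with rfl | rfl | rfl <;>
  simp [hym, hzm, hyz, Ne.symm hym, Ne.symm hzm, Ne.symm hyz, hy.le, hym', hz, hyz', hyz'.symm]

end Count

theorem Pset_has_four_elements (B : Mat3) (hB : ClusterCyclic B)
    (ε : List (Fin 3) → Fin 3 → ℝ) (hε : IsTropSigns B ε)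
    (w : List (Fin 3)) (hw : ReducedSeq w) (hne : w ≠ []) :
    {p : Fin 3 × Fin 3 | p.1 ≠ p.2 ∧
      (0 < ε w p.1 * Bmat B w p.1 p.2 ∨ 0 < ε w p.2 * Bmat B w p.2 p.1)}.ncard = 4 := by
  obtain ⟨u, t, rfl⟩ : ∃ u t, w = u ++ [t] :=
    ⟨w.dropLast, w.getLast hne, (List.dropLast_append_getLast hne).symm⟩
  obtain ⟨-, d, hdom⟩ := exists_dominates hB hε u t hw
  obtain ⟨m, hm⟩ := exists_forall_ne_eq_neg (fun j => (hε _ hw j).1) hdom.eps_eq_neg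
  exact (hB _ hw).ncard_eq_four (fun j => (hε _ hw j).1) hm
end Basic
end
end

section
/- Fix i ∈ {1,2,3} and let k_0 = K([i]) = i, s_0 = S([i]), t_0 = T([i]) be the last-index/swap/third labels of the one-step sequence [i]. For the sequences [i]S^n on the trunk (applying the S-move n times), the tropical signs are ε_{k_0}^{[i]S^n} = (−1)^{n+1}, ε_{s_0}^{[i]S^n} = (−1)^n, ε_{t_0}^{[i]S^n} = 1, and (K([i]S^n), S([i]S^n)) = (k_0, s_0) if n is even, (s_0, k_0) if n is odd, while T([i]S^n) = t_0. -/
open Matrix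

noncomputable section

/-! Along the trunk, the labels `(K, S, T)` of `w` are `(k, s, t)` with tropical signs
`(-1, 1, 1)`, and one S-move turns this into `(s, k, t)` with the same signs. Since the
`c`-vector `c_s` is nonnegative, mutation at `s` multiplies `C` on the right by the involution
`J_s + [B]_+^{s•}`: `c_s` changes sign, and every other `c`-vector gains a nonnegative multiple
of `c_s`, so keeps its sign (columns of the invertible `C` never vanish). Cyclicity turns
`b_{ks} < 0` into `b_{st} < 0`, which mutation makes positive; this excludes `t` as the new
swap index, leaving `k`. -/

section Mutation

variable {n : ℕ}

lemma CGmat_append (B : Matrix (Fin n) (Fin n) ℝ) (w : List (Fin n)) (k : Fin n) :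
    CGmat B (w ++ [k]) = CGstep B (CGmat B w) k := by
  simp [CGmat, List.foldl_append]

lemma Bmat_append (B : Matrix (Fin n) (Fin n) ℝ) (w : List (Fin n)) (k : Fin n) :
    Bmat B (w ++ [k]) = mutB k (Bmat B w) := by
  rw [Bmat, CGmat_append]; rfl

lemma colSel_pPart_neg_eq_zero {C : Matrix (Fin n) (Fin n) ℝ} {k : Fin n}
    (h : ∀ a, 0 ≤ C a k) : colSel k (pPart (-C)) = 0 := by
  ext a b
  by_cases hb : b = k
  · subst hb; simp [colSel, pPart, h a]
  · simp [colSel, hb]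

lemma Cmat_append_of_nonneg {B : Matrix (Fin n) (Fin n) ℝ} {w : List (Fin n)} {k : Fin n}
    (h : ∀ a, 0 ≤ Cmat B w a k) :
    Cmat B (w ++ [k]) = Cmat B w * (Jmat k + rowSel k (pPart (Bmat B w))) := by
  rw [Cmat, CGmat_append, CGstep]
  dsimp only
  rw [← Cmat, ← Bmat, colSel_pPart_neg_eq_zero h, Matrix.zero_mul, add_zero, mul_add]

lemma mul_Jmat_add_rowSel_apply (X P : Matrix (Fin n) (Fin n) ℝ) (k a l : Fin n) :
    (X * (Jmat k + rowSel k P)) a l = X a l * (if l = k then -1 else 1) + X a k * P k l := by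
  simp [Matrix.mul_apply, Jmat, rowSel, Matrix.diagonal_apply, mul_add,
    Finset.sum_add_distrib, mul_ite]

lemma Jmat_add_colSel_mul_apply (P Y : Matrix (Fin n) (Fin n) ℝ) (k a l : Fin n) :
    ((Jmat k + colSel k P) * Y) a l = (if a = k then -1 else 1) * Y a l + P a k * Y k l := by
  simp [Matrix.mul_apply, Jmat, colSel, Matrix.diagonal_apply, add_mul,
    Finset.sum_add_distrib, ite_mul]

lemma Jmat_add_rowSel_pPart_mul_self {B : Matrix (Fin n) (Fin n) ℝ} {k : Fin n}
    (hkk : B k k = 0) :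
    (Jmat k + rowSel k (pPart B)) * (Jmat k + rowSel k (pPart B)) = 1 := by
  ext a l
  rw [mul_Jmat_add_rowSel_apply]
  by_cases ha : a = k
  · subst ha
    by_cases hl : l = a
    · subst hl; simp [Jmat, rowSel, pPart, hkk]
    · simp [Jmat, rowSel, pPart, hl, Ne.symm hl, hkk]
  · by_cases hal : a = l
    · subst hal; simp [Jmat, rowSel, ha]
    · simp [Jmat, rowSel, ha, hal]

lemma mutB_apply_row_self {B : Matrix (Fin n) (Fin n) ℝ} {k : Fin n} (hkk : B k k = 0)
    (l : Fin n) : mutB k B k l = -B k l := by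
  rw [mutB, mul_Jmat_add_rowSel_apply, Jmat_add_colSel_mul_apply, Jmat_add_colSel_mul_apply]
  by_cases hl : l = k
  · subst hl; simp [pPart, hkk]
  · simp [pPart, hkk, hl]

lemma exists_ne_zero_of_isUnit {C : Matrix (Fin n) (Fin n) ℝ} (hC : IsUnit C) (l : Fin n) :
    ∃ a, C a l ≠ 0 := by
  obtain ⟨D, hD⟩ := hC.exists_left_inv
  by_contra! hcol
  have : (D * C) l l = 1 := by simp [hD]
  simp [Matrix.mul_apply, hcol] at this

end Mutation

lemma Real.sign_eq_neg_one_iff {r : ℝ} : Real.sign r = -1 ↔ r < 0 := by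
  unfold Real.sign
  split_ifs with h₁ h₂ <;> norm_num [h₁]

namespace IsCyclic3

variable {B : Mat3}

lemma apply_self_s18 (h : IsCyclic3 B) (a : Fin 3) : B a a = 0 := by
  rw [← Real.sign_eq_zero_iff]
  rcases h with h | h <;> rw [h] <;> fin_cases a <;> simp [cyclicPattern]

lemma apply_neg_of_sign_eq_neg_one (h : IsCyclic3 B) {a b c : Fin 3} (hab : a ≠ b)
    (hbc : b ≠ c) (hac : a ≠ c) (hneg : Real.sign (B a b) = -1) : B b c < 0 := by
  rw [← Real.sign_eq_neg_one_iff]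
  rcases h with h | h <;> rw [h] at hneg ⊢ <;> clear h <;>
    fin_cases a <;> fin_cases b <;> fin_cases c <;>
    revert hab hbc hac hneg <;> norm_num [cyclicPattern]

end IsCyclic3

lemma ReducedSeq.append_singleton {n : ℕ} {w : List (Fin n)} {k : Fin n} (hw : ReducedSeq w)
    (hne : w ≠ []) (h : w.getLast hne ≠ k) : ReducedSeq (w ++ [k]) :=
  List.IsChain.append hw (.singleton k) (by simp [List.getLast?_eq_some_getLast hne, h])

lemma isUnit_Cmat_append_of_nonneg {n : ℕ} {B : Matrix (Fin n) (Fin n) ℝ} {w : List (Fin n)}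
    {k : Fin n} (hk : ∀ a, 0 ≤ Cmat B w a k) (hkk : Bmat B w k k = 0) (hC : IsUnit (Cmat B w)) :
    IsUnit (Cmat B (w ++ [k])) := by
  rw [Cmat_append_of_nonneg hk]
  exact hC.mul (isUnit_iff_exists.2
    ⟨_, Jmat_add_rowSel_pPart_mul_self hkk, Jmat_add_rowSel_pPart_mul_self hkk⟩)

namespace IsTropSigns

variable {B : Mat3} {ε : List (Fin 3) → Fin 3 → ℝ} {w : List (Fin 3)} {k l : Fin 3}

lemma eq_one_of_pos (hε : IsTropSigns B ε) (hw : ReducedSeq w) {a : Fin 3}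
    (h : 0 < Cmat B w a l) : ε w l = 1 := by
  obtain ⟨hpm, hcoh⟩ := hε w hw l
  refine hpm.resolve_right fun hneg => ?_
  have := hcoh a
  rw [hneg] at this
  linarith

lemma eq_neg_one_of_neg (hε : IsTropSigns B ε) (hw : ReducedSeq w) {a : Fin 3}
    (h : Cmat B w a l < 0) : ε w l = -1 := by
  obtain ⟨hpm, hcoh⟩ := hε w hw l
  refine hpm.resolve_left fun hpos => ?_
  have := hcoh a
  rw [hpos] at this
  linarith

lemma nonneg_of_eq_one (hε : IsTropSigns B ε) (hw : ReducedSeq w) (h : ε w l = 1) (a : Fin 3) :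
    0 ≤ Cmat B w a l := by
  simpa [h] using (hε w hw l).2 a

lemma nil (hε : IsTropSigns B ε) (l : Fin 3) : ε [] l = 1 :=
  hε.eq_one_of_pos (a := l) List.IsChain.nil (by simp [Cmat, CGmat])

lemma append_self (hε : IsTropSigns B ε) (hw : ReducedSeq (w ++ [k])) (hk : ε w k = 1)
    (hkk : Bmat B w k k = 0) (hC : IsUnit (Cmat B w)) : ε (w ++ [k]) k = -1 := by
  have hcol := hε.nonneg_of_eq_one hw.left_of_append hk
  obtain ⟨a, ha⟩ := exists_ne_zero_of_isUnit hC k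
  refine hε.eq_neg_one_of_neg hw (a := a) ?_
  rw [Cmat_append_of_nonneg hcol, mul_Jmat_add_rowSel_apply, if_pos rfl]
  simp only [pPart, Matrix.of_apply, hkk, max_self, mul_zero, add_zero]
  linarith [(hcol a).lt_of_ne' ha]

lemma append_of_ne (hε : IsTropSigns B ε) (hw : ReducedSeq (w ++ [k])) (hk : ε w k = 1)
    (hl : ε w l = 1) (hlk : l ≠ k) (hC : IsUnit (Cmat B w)) : ε (w ++ [k]) l = 1 := by
  have hcolk := hε.nonneg_of_eq_one hw.left_of_append hk
  have hcoll := hε.nonneg_of_eq_one hw.left_of_append hl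
  obtain ⟨a, ha⟩ := exists_ne_zero_of_isUnit hC l
  refine hε.eq_one_of_pos hw (a := a) ?_
  rw [Cmat_append_of_nonneg hcolk, mul_Jmat_add_rowSel_apply, if_neg hlk, mul_one]
  have := (hcoll a).lt_of_ne' ha
  have := mul_nonneg (hcolk a) (le_max_right (Bmat B w k l) 0)
  simp only [pPart, Matrix.of_apply]
  linarith

end IsTropSigns

structure TrunkState (B : Mat3) (ε : List (Fin 3) → Fin 3 → ℝ) (K S T : List (Fin 3) → Fin 3)
    (w : List (Fin 3)) (k s t : Fin 3) : Prop where
  reduced : ReducedSeq w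
  ne_nil : w ≠ []
  K_eq : K w = k
  S_eq : S w = s
  T_eq : T w = t
  eps_K : ε w k = -1
  eps_S : ε w s = 1
  eps_T : ε w t = 1
  isUnit : IsUnit (Cmat B w)

namespace TrunkState

variable {B : Mat3} {ε : List (Fin 3) → Fin 3 → ℝ} {K S T : List (Fin 3) → Fin 3}

lemma singleton (hB : ClusterCyclic B) (hε : IsTropSigns B ε)
    (hK : ∀ (w : List (Fin 3)) (hne : w ≠ []), ReducedSeq w → K w = w.getLast hne)
    (hS : ∀ w : List (Fin 3), w ≠ [] → ReducedSeq w → S w ≠ K w)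
    (hT : ∀ w : List (Fin 3), w ≠ [] → ReducedSeq w → T w ≠ K w) (i : Fin 3) :
    TrunkState B ε K S T [i] i (S [i]) (T [i]) := by
  have hred : ReducedSeq ([] ++ [i]) := List.IsChain.singleton i
  have hKi : K [i] = i := hK [i] (List.cons_ne_nil i []) hred
  have hii : Bmat B [] i i = 0 := (hB [] List.IsChain.nil).apply_self_s18 i
  have hsi : S [i] ≠ i := by simpa only [hKi] using hS [i] (List.cons_ne_nil i []) hred
  have hti : T [i] ≠ i := by simpa only [hKi] using hT [i] (List.cons_ne_nil i []) hred
  exact ⟨hred, List.cons_ne_nil i [], hKi, rfl, rfl,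
    hε.append_self hred (hε.nil i) hii isUnit_one,
    hε.append_of_ne hred (hε.nil i) (hε.nil _) hsi isUnit_one,
    hε.append_of_ne hred (hε.nil i) (hε.nil _) hti isUnit_one,
    isUnit_Cmat_append_of_nonneg (hε.nonneg_of_eq_one List.IsChain.nil (hε.nil i)) hii isUnit_one⟩

lemma append (hB : ClusterCyclic B) (hε : IsTropSigns B ε)
    (hK : ∀ (w : List (Fin 3)) (hne : w ≠ []), ReducedSeq w → K w = w.getLast hne)
    (hS : ∀ w : List (Fin 3), w ≠ [] → ReducedSeq w →
      S w ≠ K w ∧ ε w (S w) * Real.sign (Bmat B w (K w) (S w)) = -1 ∧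
        ε w (K w) ≠ ε w (S w))
    (hT : ∀ w : List (Fin 3), w ≠ [] → ReducedSeq w → T w ≠ K w ∧ T w ≠ S w)
    {w : List (Fin 3)} {k s t : Fin 3} (h : TrunkState B ε K S T w k s t) :
    TrunkState B ε K S T (w ++ [s]) s k t := by
  obtain ⟨hsk, hsign, -⟩ := hS w h.ne_nil h.reduced
  obtain ⟨htk, hts⟩ := hT w h.ne_nil h.reduced
  simp only [h.K_eq, h.S_eq, h.T_eq, h.eps_S, one_mul] at hsk hsign htk hts
  have hw : ReducedSeq (w ++ [s]) :=
    h.reduced.append_singleton h.ne_nil (by rw [← hK w h.ne_nil h.reduced, h.K_eq]; exact hsk.symm)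
  have hne : w ++ [s] ≠ [] := List.concat_ne_nil s w
  have hst : Bmat B w s t < 0 :=
    (hB w h.reduced).apply_neg_of_sign_eq_neg_one hsk.symm hts.symm htk.symm hsign
  have hss : Bmat B w s s = 0 := (hB w h.reduced).apply_self_s18 s
  have hεs : ε (w ++ [s]) s = -1 := hε.append_self hw h.eps_S hss h.isUnit
  have hεt : ε (w ++ [s]) t = 1 := hε.append_of_ne hw h.eps_S h.eps_T hts h.isUnit
  have hK' : K (w ++ [s]) = s := by rw [hK _ hne hw, List.getLast_concat]
  have hst' : 0 < Bmat B (w ++ [s]) s t := by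
    rw [Bmat_append, mutB_apply_row_self hss]; linarith
  obtain ⟨hS's, hS'sign, hS'eps⟩ := hS _ hne hw
  rw [hK'] at hS's hS'sign hS'eps
  have hS' : S (w ++ [s]) = k := by
    by_contra hS'k
    have hS't : S (w ++ [s]) = t := by omega
    rw [hS't, hεt, Real.sign_of_pos hst', one_mul] at hS'sign
    norm_num at hS'sign
  have hεk : ε (w ++ [s]) k = 1 :=
    (hε _ hw k).1.resolve_right fun hk => hS'eps (by rw [hS', hεs, hk])
  obtain ⟨hT's, hT'k⟩ := hT _ hne hw
  rw [hK'] at hT's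
  rw [hS'] at hT'k
  exact ⟨hw, hne, hK', hS', by omega, hεs, hεk, hεt,
    isUnit_Cmat_append_of_nonneg (hε.nonneg_of_eq_one h.reduced h.eps_S) hss h.isUnit⟩

end TrunkState

theorem tropical_signs_on_trunk (B : Mat3) (hB : ClusterCyclic B)
    (ε : List (Fin 3) → Fin 3 → ℝ) (hε : IsTropSigns B ε)
    (K S T : List (Fin 3) → Fin 3)
    (hK : ∀ (w : List (Fin 3)) (hne : w ≠ []), ReducedSeq w → K w = w.getLast hne)
    (hS : ∀ w : List (Fin 3), w ≠ [] → ReducedSeq w →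
      S w ≠ K w ∧ ε w (S w) * Real.sign (Bmat B w (K w) (S w)) = -1 ∧
        ε w (K w) ≠ ε w (S w))
    (hT : ∀ w : List (Fin 3), w ≠ [] → ReducedSeq w → T w ≠ K w ∧ T w ≠ S w)
    (i : Fin 3) (wseq : ℕ → List (Fin 3))
    (hw0 : wseq 0 = [i])
    (hwsucc : ∀ n, wseq (n + 1) = wseq n ++ [S (wseq n)]) :
    ∀ n : ℕ,
      ε (wseq n) i = (-1 : ℝ) ^ (n + 1) ∧
      ε (wseq n) (S [i]) = (-1 : ℝ) ^ n ∧
      ε (wseq n) (T [i]) = 1 ∧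
      (Even n → K (wseq n) = i ∧ S (wseq n) = S [i]) ∧
      (¬ Even n → K (wseq n) = S [i] ∧ S (wseq n) = i) ∧
      T (wseq n) = T [i] := by
  have trunk : ∀ n, TrunkState B ε K S T (wseq n) (if Even n then i else S [i])
      (if Even n then S [i] else i) (T [i]) := by
    intro n
    induction n with
    | zero =>
      simpa [hw0] using TrunkState.singleton hB hε hK (fun w hne hw => (hS w hne hw).1)
        (fun w hne hw => (hT w hne hw).1) i
    | succ n ih =>
      rw [hwsucc, ih.S_eq]
      simpa only [Nat.even_add_one, ite_not] using ih.append hB hε hK hS hT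
  intro n
  have h := trunk n
  rcases Nat.even_or_odd n with hn | hn
  · simp only [hn, if_true] at h
    exact ⟨by rw [hn.add_one.neg_one_pow, h.eps_K], by rw [hn.neg_one_pow, h.eps_S], h.eps_T,
      fun _ => ⟨h.K_eq, h.S_eq⟩, fun hn' => absurd hn hn', h.T_eq⟩
  · simp only [Nat.not_even_iff_odd.2 hn, if_false] at h
    exact ⟨by rw [hn.add_one.neg_one_pow, h.eps_S], by rw [hn.neg_one_pow, h.eps_K], h.eps_T,
      fun hn' => absurd hn' (Nat.not_even_iff_odd.2 hn), fun _ => ⟨h.K_eq, h.S_eq⟩, h.T_eq⟩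
end
end
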